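/- Let T_D be shifted exponential with rate λ_d > 0 and shift c ≥ 0, independent of T_N(K) (the K-th order statistic of N i.i.d. shifted exponentials with rate λ_s, shift c). Then for t > c, P(T_N(K) ≥ t, T_N(K) ≤ T_D) = Σ_{j=0}^{K-1} B_{K,j}·λ_s·e^{-H_{K,j}(t-c)}/H_{K,j}, where B_{K,j} = K·binom(N,K)·binom(K-1,j)·(-1)^j and H_{K,j} = λ_s(N-K+1+j) + λ_d. -/

import Mathlib

open MeasureTheory ProbabilityTheory Real

/-- The shifted exponential distribution with rate `l` and shift `c`:
density `l * exp (-l*(t-c))` for `t > c`, `0` otherwise. -/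
noncomputable def shiftedExp (l c : ℝ) : MeasureTheory.Measure ℝ :=
  MeasureTheory.volume.withDensity
    (fun t => ENNReal.ofReal (if c < t then l * Real.exp (-l * (t - c)) else 0))

/-- The `K`-th order statistic (K-th smallest value) of the family `T` evaluated at `ω`. -/
noncomputable def orderStat {Ω : Type*} {N : ℕ} (T : Fin N → Ω → ℝ) (K : ℕ) (ω : Ω) : ℝ :=
  sInf {x : ℝ | K ≤ Nat.card {i : Fin N // T i ω ≤ x}}

open Set Filter Topology
open scoped Finset ENNReal

/-!
Conditionally on the deadline `D = d ≥ t`, the event is `t ≤ T_N(K) ≤ d`, of probability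
`Φ d - Φ t`, where `Φ y = P(Bin(N, F y) ≥ K)` is the CDF of the order statistic and `F` the common
CDF of the `T i`. Hence the probability is `∫_t^∞ λ_d e^{-λ_d(d-c)} (Φ d - Φ t) dd`. Integrating
by parts turns this into `∫_t^∞ e^{-λ_d(y-c)} Φ'(y) dy`, and `Φ'` is the order-statistic density
`K binom(N,K) F^{K-1} (1-F)^{N-K} F'`; expanding `F^{K-1} = (1 - e^{-λ_s(y-c)})^{K-1}` binomially
leaves a sum of `K` exponentials, each integrated in closed form.
-/

section OrderStat

variable {Ω : Type*} {N K : ℕ}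

lemma orderStat_le_iff (hK : 1 ≤ K) (hKN : K ≤ N) (T : Fin N → Ω → ℝ) (ω : Ω) (y : ℝ) :
    orderStat T K ω ≤ y ↔ K ≤ #{i | T i ω ≤ y} := by
  set S := {x : ℝ | K ≤ #{i | T i ω ≤ x}}
  have hS : orderStat T K ω = sInf S := by
    simp only [orderStat, S, Nat.card_eq_fintype_card, Fintype.card_subtype]
  -- `S` is a finite union of closed half-lines, so it contains its infimum.
  have hclosed : IsClosed S := by
    have : S = ⋃ A : {A : Finset (Fin N) // K ≤ #A}, ⋂ i ∈ A.1, Ici (T i ω) := by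
      ext x
      simp only [S, mem_ofPred_eq, mem_iUnion, mem_iInter, mem_Ici, Subtype.exists]
      constructor
      · exact fun h => ⟨_, h, fun i hi => (Finset.mem_filter.1 hi).2⟩
      · rintro ⟨A, hA, hx⟩
        exact hA.trans (Finset.card_le_card fun i hi =>
          Finset.mem_filter.2 ⟨Finset.mem_univ i, hx i hi⟩)
    rw [this]
    exact isClosed_iUnion_of_finite fun A => isClosed_biInter fun i _ => isClosed_Ici
  have hne : S.Nonempty := by
    refine ⟨⨆ i, T i ω, ?_⟩
    rw [mem_ofPred_eq, Finset.filter_true_of_mem fun i _ =>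
      le_ciSup (Set.finite_range fun j => T j ω).bddAbove i, Finset.card_univ, Fintype.card_fin]
    exact hKN
  have hbdd : BddBelow S := by
    refine ⟨⨅ i, T i ω, fun x hx => ?_⟩
    obtain ⟨i, hi⟩ := Finset.card_pos.1 (Nat.lt_of_lt_of_le hK hx)
    exact (ciInf_le (Set.finite_range fun j => T j ω).bddBelow i).trans (Finset.mem_filter.1 hi).2
  have hmono : ∀ x ∈ S, ∀ z, x ≤ z → z ∈ S := fun x hx z hxz =>
    hx.trans (Finset.card_le_card
      (Finset.monotone_filter_right _ fun i _ (hi : T i ω ≤ x) => hi.trans hxz))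
  rw [hS]
  exact ⟨fun h => hmono _ (hclosed.csInf_mem hne hbdd) _ h, fun h => csInf_le hbdd h⟩

lemma orderStat_lt_iff (hK : 1 ≤ K) (hKN : K ≤ N) (T : Fin N → Ω → ℝ) (ω : Ω) (y : ℝ) :
    orderStat T K ω < y ↔ K ≤ #{i | T i ω < y} := by
  constructor
  · intro h
    exact ((orderStat_le_iff hK hKN T ω _).1 le_rfl).trans (Finset.card_le_card
      (Finset.monotone_filter_right _ fun i _ (hi : T i ω ≤ _) => hi.trans_lt h))
  · intro h
    have hne : ({i | T i ω < y} : Finset (Fin N)).Nonempty :=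
      Finset.card_pos.1 (Nat.lt_of_lt_of_le hK h)
    -- the largest coordinate below `y` is already at least the `K`-th smallest
    refine lt_of_le_of_lt ((orderStat_le_iff hK hKN T ω _).2 (h.trans (Finset.card_le_card
      (Finset.monotone_filter_right _ fun i _ hi =>
      Finset.le_sup' (fun j => T j ω) (Finset.mem_filter.2 ⟨Finset.mem_univ i, hi⟩)))))
      ((Finset.sup'_lt_iff hne).2 fun i hi => (Finset.mem_filter.1 hi).2)

lemma measurable_orderStat [MeasurableSpace Ω] (hK : 1 ≤ K) (hKN : K ≤ N) {T : Fin N → Ω → ℝ}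
    (hT : ∀ i, Measurable (T i)) : Measurable (orderStat T K) := by
  refine measurable_of_Iic fun y => ?_
  have hcount : Measurable fun ω => #{i | T i ω ≤ y} := by
    simp_rw [Finset.card_filter]
    exact Finset.measurable_sum _ fun i _ =>
      Measurable.ite (measurableSet_le (hT i) measurable_const) measurable_const measurable_const
  have : orderStat T K ⁻¹' Iic y = {ω | K ≤ #{i | T i ω ≤ y}} :=
    Set.ext fun ω => orderStat_le_iff hK hKN T ω y
  rw [this]
  exact measurableSet_le measurable_const hcount

end OrderStat

noncomputable def binomTail (N K : ℕ) (p : ℝ) : ℝ :=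
  ∑ m ∈ Finset.Icc K N, (N.choose m : ℝ) * p ^ m * (1 - p) ^ (N - m)

section BinomTail

variable {N K : ℕ}

lemma binomTail_nonneg {p : ℝ} (hp₀ : 0 ≤ p) (hp₁ : p ≤ 1) : 0 ≤ binomTail N K p :=
  Finset.sum_nonneg fun m _ => by have := sub_nonneg.2 hp₁; positivity

lemma hasDerivAt_binomTail (hKN : K ≤ N) (p : ℝ) :
    HasDerivAt (binomTail N K) (K * N.choose K * p ^ (K - 1) * (1 - p) ^ (N - K)) p := by
  -- the derivatives of the summands telescope
  set a : ℕ → ℝ := fun m => m * N.choose m * p ^ (m - 1) * (1 - p) ^ (N - m)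
  have hterm : ∀ m ∈ Finset.Icc K N, HasDerivAt
      (fun q => (N.choose m : ℝ) * q ^ m * (1 - q) ^ (N - m)) (-(a (m + 1) - a m)) p := by
    intro m _
    have hchoose : (N.choose (m + 1) : ℝ) * (m + 1) = N.choose m * (N - m : ℕ) := by
      exact_mod_cast Nat.choose_succ_right_eq N m
    refine (((hasDerivAt_pow m p).const_mul (N.choose m : ℝ)).fun_mul
      (((hasDerivAt_id' p).const_sub 1).fun_pow (N - m))).congr_deriv ?_
    simp only [a, Nat.add_sub_cancel, Nat.sub_add_eq]
    push_cast
    linear_combination p ^ m * (1 - p) ^ (N - m - 1) * hchoose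
  have hsum := HasDerivAt.fun_sum hterm
  rwa [Finset.sum_neg_distrib, Finset.sum_Icc_sub hKN, neg_sub, show a (N + 1) = 0 by simp [a],
    sub_zero] at hsum

lemma continuous_binomTail : Continuous (binomTail N K) := by
  unfold binomTail; fun_prop

lemma binomTail_monotoneOn (hKN : K ≤ N) : MonotoneOn (binomTail N K) (Icc 0 1) := by
  refine monotoneOn_of_hasDerivWithinAt_nonneg (convex_Icc 0 1) continuous_binomTail.continuousOn
    (fun p _ => (hasDerivAt_binomTail hKN p).hasDerivWithinAt) fun p hp => ?_
  rw [interior_Icc] at hp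
  have := sub_nonneg.2 hp.2.le
  have := hp.1.le
  positivity

end BinomTail

lemma measure_pi_setOf_le_card_filter {ι α : Type*} [Fintype ι] [MeasurableSpace α]
    (μ : Measure α) [SigmaFinite μ] (p : α → Prop) [DecidablePred p]
    (hp : MeasurableSet {a | p a}) (K : ℕ) :
    Measure.pi (fun _ : ι => μ) {x | K ≤ #{i | p (x i)}}
      = ∑ m ∈ Finset.Icc K (Fintype.card ι),
          ((Fintype.card ι).choose m : ℝ≥0∞) * μ {a | p a} ^ m
            * μ {a | ¬p a} ^ (Fintype.card ι - m) := by
  classical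
  set n := Fintype.card ι
  have hfiber : ∀ A : Finset ι, {x : ι → α | ({i | p (x i)} : Finset ι) = A}
      = univ.pi fun i => if i ∈ A then {a | p a} else {a | ¬p a} := by
    intro A
    ext x
    simp only [mem_ofPred_eq, Set.mem_pi, mem_univ, true_implies, Finset.ext_iff, Finset.mem_filter,
      Finset.mem_univ, true_and]
    refine forall_congr' fun i => ?_
    by_cases hi : i ∈ A <;> simp [hi]
  have hunion : {x : ι → α | K ≤ #{i | p (x i)}}
      = ⋃ A ∈ ({A | K ≤ #A} : Finset (Finset ι)), {x | ({i | p (x i)} : Finset ι) = A} := by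
    ext x
    simp
  have hdisj : PairwiseDisjoint (↑({A | K ≤ #A} : Finset (Finset ι)))
      fun A => {x : ι → α | ({i | p (x i)} : Finset ι) = A} := by
    intro A _ B _ hAB
    rw [Function.onFun, Set.disjoint_left]
    rintro x rfl hB
    exact hAB hB
  rw [hunion, measure_biUnion_finset hdisj
    fun A _ => hfiber A ▸ MeasurableSet.univ_pi fun i => by split_ifs; exacts [hp, hp.compl]]
  have hbox : ∀ A : Finset ι, Measure.pi (fun _ : ι => μ) {x | ({i | p (x i)} : Finset ι) = A}
      = μ {a | p a} ^ #A * μ {a | ¬p a} ^ (n - #A) := by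
    intro A
    rw [hfiber, Measure.pi_pi]
    simp only [apply_ite μ, Finset.prod_ite, Finset.prod_const, Finset.filter_mem_eq_inter,
      Finset.univ_inter]
    rw [Finset.filter_notMem_eq_sdiff, Finset.card_univ_sdiff]
  simp_rw [hbox]
  rw [Finset.sum_filter, ← Finset.powerset_univ, Finset.sum_powerset_apply_card
    (fun m => if K ≤ m then μ {a | p a} ^ m * μ {a | ¬p a} ^ (n - m) else 0)]
  simp_rw [smul_ite, smul_zero, ← Finset.sum_filter, nsmul_eq_mul, mul_assoc]
  rw [Finset.card_univ]
  congr 1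
  ext m
  simp only [Finset.mem_filter, Finset.mem_range, Finset.mem_Icc]
  omega

lemma measure_pi_setOf_le_card_filter_eq_binomTail {ι α : Type*} [Fintype ι] [MeasurableSpace α]
    (μ : Measure α) [IsProbabilityMeasure μ] (p : α → Prop) [DecidablePred p]
    (hp : MeasurableSet {a | p a}) (K : ℕ) :
    Measure.pi (fun _ : ι => μ) {x | K ≤ #{i | p (x i)}}
      = ENNReal.ofReal (binomTail (Fintype.card ι) K (μ.real {a | p a})) := by
  have hcompl : μ.real {a | ¬p a} = 1 - μ.real {a | p a} := probReal_compl_eq_one_sub hp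
  rw [measure_pi_setOf_le_card_filter μ p hp, binomTail, ENNReal.ofReal_sum_of_nonneg]
  · refine Finset.sum_congr rfl fun m _ => ?_
    rw [← hcompl, ENNReal.ofReal_mul (by positivity), ENNReal.ofReal_mul (by positivity),
      ENNReal.ofReal_pow measureReal_nonneg, ENNReal.ofReal_pow measureReal_nonneg,
      ENNReal.ofReal_natCast, ofReal_measureReal, ofReal_measureReal]
  · intro m _
    rw [← hcompl]
    positivity

lemma lintegral_Ioi_ofReal_of_hasDerivAt_of_nonneg {g g' : ℝ → ℝ} {a l : ℝ}
    (hderiv : ∀ x ∈ Ici a, HasDerivAt g (g' x) x) (hg' : ∀ x ∈ Ioi a, 0 ≤ g' x)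
    (hg : Tendsto g atTop (𝓝 l)) :
    ∫⁻ x in Ioi a, ENNReal.ofReal (g' x) = ENNReal.ofReal (l - g a) := by
  rw [← ofReal_integral_eq_lintegral_ofReal (integrableOn_Ioi_deriv_of_nonneg' hderiv hg' hg)
    (ae_restrict_of_forall_mem measurableSet_Ioi hg'),
    integral_Ioi_of_hasDerivAt_of_nonneg' hderiv hg' hg]

lemma le_of_hasDerivAt_of_nonneg_of_tendsto {g g' : ℝ → ℝ} {a l : ℝ}
    (hderiv : ∀ x ∈ Ici a, HasDerivAt g (g' x) x) (hg' : ∀ x ∈ Ioi a, 0 ≤ g' x)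
    (hg : Tendsto g atTop (𝓝 l)) : g a ≤ l := by
  have := integral_Ioi_of_hasDerivAt_of_nonneg' hderiv hg' hg
  linarith [setIntegral_nonneg (μ := volume) measurableSet_Ioi hg']

lemma hasDerivAt_exp_neg_mul_sub (b c x : ℝ) :
    HasDerivAt (fun x => exp (-b * (x - c))) (-b * exp (-b * (x - c))) x := by
  simpa [mul_comm] using (((hasDerivAt_id x).sub_const c).const_mul (-b)).exp

lemma tendsto_exp_neg_mul_sub_atTop {b : ℝ} (hb : 0 < b) (c : ℝ) :
    Tendsto (fun x => exp (-b * (x - c))) atTop (𝓝 0) :=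
  tendsto_exp_atBot.comp <| (tendsto_atTop_add_const_right _ _ tendsto_id).const_mul_atTop_of_neg
    (neg_neg_iff_pos.2 hb)

lemma exp_neg_mul_sub_le_one {b c x : ℝ} (hb : 0 ≤ b) (hx : c ≤ x) : exp (-b * (x - c)) ≤ 1 :=
  exp_le_one_iff.2 (by nlinarith)

section ShiftedExp

variable {l c : ℝ}

instance : NullSingletonClass (shiftedExp l c) := by
  unfold shiftedExp; infer_instance

lemma shiftedExp_Ioi (hl : 0 < l) {y : ℝ} (hy : c ≤ y) :
    shiftedExp l c (Ioi y) = ENNReal.ofReal (exp (-l * (y - c))) := by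
  rw [shiftedExp, withDensity_apply _ measurableSet_Ioi,
    setLIntegral_congr_fun measurableSet_Ioi fun x hx => by rw [if_pos (hy.trans_lt hx)],
    lintegral_Ioi_ofReal_of_hasDerivAt_of_nonneg (g := fun x => -exp (-l * (x - c)))
      (fun x _ => by simpa using (hasDerivAt_exp_neg_mul_sub l c x).fun_neg)
      (fun x _ => by positivity) (by simpa using (tendsto_exp_neg_mul_sub_atTop hl c).neg)]
  simp

lemma isProbabilityMeasure_shiftedExp (hl : 0 < l) : IsProbabilityMeasure (shiftedExp l c) := by
  have hIic : shiftedExp l c (Iic c) = 0 := by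
    rw [shiftedExp, withDensity_apply _ measurableSet_Iic]
    exact setLIntegral_eq_zero measurableSet_Iic fun x (hx : x ≤ c) => by simp [not_lt.2 hx]
  constructor
  rw [← Iic_union_Ioi (a := c), measure_union (Iic_disjoint_Ioi le_rfl) measurableSet_Ioi, hIic,
    shiftedExp_Ioi hl le_rfl]
  simp

lemma shiftedExp_real_Iic (hl : 0 < l) {y : ℝ} (hy : c ≤ y) :
    (shiftedExp l c).real (Iic y) = 1 - exp (-l * (y - c)) := by
  have := isProbabilityMeasure_shiftedExp (c := c) hl
  rw [← compl_Ioi, probReal_compl_eq_one_sub measurableSet_Ioi, measureReal_def,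
    shiftedExp_Ioi hl hy, ENNReal.toReal_ofReal (exp_pos _).le]

end ShiftedExp

noncomputable def shiftedExpOrderStatCDF (N K : ℕ) (l c y : ℝ) : ℝ :=
  binomTail N K (1 - exp (-l * (y - c)))

section OrderStatCDF

variable {N K : ℕ} {l c : ℝ}

lemma measure_pi_shiftedExp_orderStat_le (hK : 1 ≤ K) (hKN : K ≤ N) (hl : 0 < l) {y : ℝ}
    (hy : c ≤ y) :
    Measure.pi (fun _ : Fin N => shiftedExp l c) {x | orderStat (fun i x => x i) K x ≤ y}
      = ENNReal.ofReal (shiftedExpOrderStatCDF N K l c y) := by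
  have := isProbabilityMeasure_shiftedExp (c := c) hl
  simp_rw [orderStat_le_iff hK hKN]
  rw [measure_pi_setOf_le_card_filter_eq_binomTail _ (· ≤ y) measurableSet_Iic, Fintype.card_fin,
    shiftedExpOrderStatCDF, ← shiftedExp_real_Iic hl hy]
  rfl

lemma measure_pi_shiftedExp_orderStat_lt (hK : 1 ≤ K) (hKN : K ≤ N) (hl : 0 < l) {y : ℝ}
    (hy : c ≤ y) :
    Measure.pi (fun _ : Fin N => shiftedExp l c) {x | orderStat (fun i x => x i) K x < y}
      = ENNReal.ofReal (shiftedExpOrderStatCDF N K l c y) := by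
  have := isProbabilityMeasure_shiftedExp (c := c) hl
  simp_rw [orderStat_lt_iff hK hKN]
  rw [measure_pi_setOf_le_card_filter_eq_binomTail _ (· < y) measurableSet_Iio, Fintype.card_fin,
    shiftedExpOrderStatCDF, ← shiftedExp_real_Iic hl hy, ← measureReal_congr Iio_ae_eq_Iic]
  rfl

lemma one_sub_exp_neg_mul_sub_mem_Icc (hl : 0 ≤ l) {y : ℝ} (hy : c ≤ y) :
    1 - exp (-l * (y - c)) ∈ Icc 0 1 :=
  ⟨sub_nonneg.2 (exp_neg_mul_sub_le_one hl hy), sub_le_self _ (exp_pos _).le⟩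

lemma shiftedExpOrderStatCDF_nonneg (hl : 0 ≤ l) {y : ℝ} (hy : c ≤ y) :
    0 ≤ shiftedExpOrderStatCDF N K l c y :=
  binomTail_nonneg (one_sub_exp_neg_mul_sub_mem_Icc hl hy).1
    (one_sub_exp_neg_mul_sub_mem_Icc hl hy).2

lemma shiftedExpOrderStatCDF_mono (hKN : K ≤ N) (hl : 0 ≤ l) {y z : ℝ} (hy : c ≤ y) (hyz : y ≤ z) :
    shiftedExpOrderStatCDF N K l c y ≤ shiftedExpOrderStatCDF N K l c z :=
  binomTail_monotoneOn hKN (one_sub_exp_neg_mul_sub_mem_Icc hl hy)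
    (one_sub_exp_neg_mul_sub_mem_Icc hl (hy.trans hyz))
    (sub_le_sub_left (exp_le_exp.2 (by nlinarith)) 1)

lemma hasDerivAt_shiftedExpOrderStatCDF (hKN : K ≤ N) (l c y : ℝ) :
    HasDerivAt (shiftedExpOrderStatCDF N K l c)
      (K * N.choose K * (1 - exp (-l * (y - c))) ^ (K - 1) * exp (-l * (y - c)) ^ (N - K)
        * (l * exp (-l * (y - c)))) y :=
  ((hasDerivAt_binomTail hKN _).comp y
    ((hasDerivAt_exp_neg_mul_sub l c y).const_sub 1)).congr_deriv (by ring)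

lemma measure_pi_shiftedExp_orderStat_mem_Icc (hK : 1 ≤ K) (hKN : K ≤ N) (hl : 0 < l) {t d : ℝ}
    (hct : c ≤ t) (htd : t ≤ d) :
    Measure.pi (fun _ : Fin N => shiftedExp l c)
        {x | t ≤ orderStat (fun i x => x i) K x ∧ orderStat (fun i x => x i) K x ≤ d}
      = ENNReal.ofReal (shiftedExpOrderStatCDF N K l c d - shiftedExpOrderStatCDF N K l c t) := by
  have := isProbabilityMeasure_shiftedExp (c := c) hl
  have hset : {x : Fin N → ℝ |
        t ≤ orderStat (fun i x => x i) K x ∧ orderStat (fun i x => x i) K x ≤ d}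
      = {x | orderStat (fun i x => x i) K x ≤ d} \ {x | orderStat (fun i x => x i) K x < t} := by
    ext x
    simp [and_comm]
  have hsub : {x : Fin N → ℝ | orderStat (fun i x => x i) K x < t}
      ⊆ {x | orderStat (fun i x => x i) K x ≤ d} := fun x (hx : _ < t) => hx.le.trans htd
  rw [hset, measure_sdiff hsub
      ((measurable_orderStat hK hKN measurable_pi_apply) measurableSet_Iio).nullMeasurableSet
      (measure_ne_top _ _),
    measure_pi_shiftedExp_orderStat_le hK hKN hl (hct.trans htd),
    measure_pi_shiftedExp_orderStat_lt hK hKN hl hct,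
    ENNReal.ofReal_sub _ (shiftedExpOrderStatCDF_nonneg hl.le hct)]

end OrderStatCDF

-- `B_{K,j}` and `H_{K,j}` in the notation of the closed form.
noncomputable def deadlineCoeff (N K j : ℕ) : ℝ :=
  K * N.choose K * (K - 1).choose j * (-1) ^ j

noncomputable def deadlineRate (N K : ℕ) (ls ld : ℝ) (j : ℕ) : ℝ :=
  ls * ((N : ℝ) - K + 1 + j) + ld

section Deadline

variable {N K : ℕ} {ls ld c : ℝ}

lemma deadlineRate_pos (hKN : K ≤ N) (hls : 0 < ls) (hld : 0 < ld) (j : ℕ) :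
    0 < deadlineRate N K ls ld j := by
  have : (K : ℝ) ≤ N := by exact_mod_cast hKN
  unfold deadlineRate
  nlinarith [(Nat.cast_nonneg j : (0 : ℝ) ≤ j)]

lemma exp_mul_orderStat_density_eq_sum (hK : 1 ≤ K) (hKN : K ≤ N) (ls ld c u : ℝ) :
    exp (-ld * (u - c)) * (K * N.choose K * (1 - exp (-ls * (u - c))) ^ (K - 1)
        * exp (-ls * (u - c)) ^ (N - K) * (ls * exp (-ls * (u - c))))
      = ∑ j ∈ Finset.range K,
          deadlineCoeff N K j * ls * exp (-deadlineRate N K ls ld j * (u - c)) := by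
  have hbin : (1 - exp (-ls * (u - c))) ^ (K - 1)
      = ∑ j ∈ Finset.range K, (-1) ^ j * exp (-ls * (u - c)) ^ j * ((K - 1).choose j : ℝ) := by
    rw [sub_eq_neg_add, add_pow, Nat.sub_add_cancel hK]
    exact Finset.sum_congr rfl fun j _ => by rw [neg_pow, one_pow, mul_one]
  have hexp : ∀ j, exp (-deadlineRate N K ls ld j * (u - c))
      = exp (-ld * (u - c)) * exp (-ls * (u - c)) ^ (N - K) * exp (-ls * (u - c))
        * exp (-ls * (u - c)) ^ j := by
    intro j
    rw [← exp_nat_mul, ← exp_nat_mul, ← exp_add, ← exp_add, ← exp_add, deadlineRate,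
      Nat.cast_sub hKN]
    ring_nf
  simp only [hbin, hexp, Finset.mul_sum, Finset.sum_mul]
  refine Finset.sum_congr rfl fun j _ => ?_
  rw [deadlineCoeff]
  ring

lemma toReal_lintegral_Ioi_deadline (hK : 1 ≤ K) (hKN : K ≤ N) (hls : 0 < ls) (hld : 0 < ld)
    {t : ℝ} (hct : c ≤ t) :
    (∫⁻ u in Ioi t, ENNReal.ofReal (ld * exp (-ld * (u - c))
        * (shiftedExpOrderStatCDF N K ls c u - shiftedExpOrderStatCDF N K ls c t))).toReal
      = ∑ j ∈ Finset.range K, deadlineCoeff N K j * ls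
          * exp (-deadlineRate N K ls ld j * (t - c)) / deadlineRate N K ls ld j := by
  set Φ := shiftedExpOrderStatCDF N K ls c
  have hH := deadlineRate_pos hKN hls hld
  -- an antiderivative, found by integrating the density term by parts
  set A : ℝ → ℝ := fun u => -(exp (-ld * (u - c)) * (Φ u - Φ t))
    - ∑ j ∈ Finset.range K, deadlineCoeff N K j * ls
        * exp (-deadlineRate N K ls ld j * (u - c)) / deadlineRate N K ls ld j
  have hderiv : ∀ u ∈ Ici t, HasDerivAt A (ld * exp (-ld * (u - c)) * (Φ u - Φ t)) u := by
    intro u _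
    have hΦ := ((hasDerivAt_exp_neg_mul_sub ld c u).mul
      ((hasDerivAt_shiftedExpOrderStatCDF hKN ls c u).sub_const (Φ t))).neg
    have hsum := HasDerivAt.fun_sum fun j (_ : j ∈ Finset.range K) =>
      ((hasDerivAt_exp_neg_mul_sub (deadlineRate N K ls ld j) c u).const_mul
        (deadlineCoeff N K j * ls)).div_const (deadlineRate N K ls ld j)
    refine (hΦ.sub hsum).congr_deriv ?_
    have hdensity := exp_mul_orderStat_density_eq_sum (ld := ld) hK hKN ls c u
    have hcancel : ∀ j ∈ Finset.range K, deadlineCoeff N K j * ls * (-deadlineRate N K ls ld j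
        * exp (-deadlineRate N K ls ld j * (u - c))) / deadlineRate N K ls ld j
        = -(deadlineCoeff N K j * ls * exp (-deadlineRate N K ls ld j * (u - c))) :=
      fun j _ => by field_simp [(hH j).ne']
    rw [Finset.sum_congr rfl hcancel, Finset.sum_neg_distrib, ← hdensity]
    ring
  have hpos : ∀ u ∈ Ioi t, 0 ≤ ld * exp (-ld * (u - c)) * (Φ u - Φ t) := fun u hu =>
    mul_nonneg (by positivity) (sub_nonneg.2 (shiftedExpOrderStatCDF_mono hKN hls.le hct hu.le))
  have hlim : Tendsto A atTop (𝓝 0) := by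
    have hΦ : Tendsto Φ atTop (𝓝 (binomTail N K (1 - 0))) :=
      (continuous_binomTail.tendsto _).comp
        (tendsto_const_nhds.sub (tendsto_exp_neg_mul_sub_atTop hls c))
    have := ((tendsto_exp_neg_mul_sub_atTop hld c).mul (hΦ.sub_const (Φ t))).neg.sub
      (tendsto_finsetSum (Finset.range K) fun j _ =>
        ((tendsto_exp_neg_mul_sub_atTop (hH j) c).const_mul (deadlineCoeff N K j * ls)).div_const
          (deadlineRate N K ls ld j))
    simpa [A] using this
  rw [lintegral_Ioi_ofReal_of_hasDerivAt_of_nonneg hderiv hpos hlim, ENNReal.toReal_ofReal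
    (sub_nonneg.2 (le_of_hasDerivAt_of_nonneg_of_tendsto hderiv hpos hlim))]
  simp [A]

end Deadline

section Product

variable {N K : ℕ} {ls ld c t : ℝ}

lemma measurableSet_setOf_le_orderStat_le (hK : 1 ≤ K) (hKN : K ≤ N) (t : ℝ) :
    MeasurableSet {q : ℝ × (Fin N → ℝ) |
      t ≤ orderStat (fun i x => x i) K q.2 ∧ orderStat (fun i x => x i) K q.2 ≤ q.1} := by
  have hG : Measurable fun q : ℝ × (Fin N → ℝ) => orderStat (fun i x => x i) K q.2 :=
    (measurable_orderStat hK hKN measurable_pi_apply).comp measurable_snd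
  exact (measurableSet_le measurable_const hG).inter (measurableSet_le hG measurable_fst)

lemma toReal_prod_measure_orderStat_tail_le (hK : 1 ≤ K) (hKN : K ≤ N) (hls : 0 < ls)
    (hld : 0 < ld) (hct : c ≤ t) :
    (((shiftedExp ld c).prod (Measure.pi fun _ : Fin N => shiftedExp ls c))
        {q | t ≤ orderStat (fun i x => x i) K q.2 ∧ orderStat (fun i x => x i) K q.2 ≤ q.1}).toReal
      = ∑ j ∈ Finset.range K, deadlineCoeff N K j * ls
          * exp (-deadlineRate N K ls ld j * (t - c)) / deadlineRate N K ls ld j := by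
  have := isProbabilityMeasure_shiftedExp (c := c) hls
  set Φ := shiftedExpOrderStatCDF N K ls c
  have hslice : ∀ d, Measure.pi (fun _ : Fin N => shiftedExp ls c)
      {x | t ≤ orderStat (fun i x => x i) K x ∧ orderStat (fun i x => x i) K x ≤ d}
      = (Ici t).indicator (fun d => ENNReal.ofReal (Φ d - Φ t)) d := by
    intro d
    by_cases htd : t ≤ d
    · rw [indicator_of_mem (show d ∈ Ici t from htd)]
      exact measure_pi_shiftedExp_orderStat_mem_Icc hK hKN hls hct htd
    · rw [indicator_of_notMem (show d ∉ Ici t from htd)]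
      exact measure_mono_null (fun x hx => (htd (hx.1.trans hx.2)).elim) measure_empty
  have hdensity : Measurable fun u : ℝ =>
      ENNReal.ofReal (if c < u then ld * exp (-ld * (u - c)) else 0) :=
    (Measurable.ite measurableSet_Ioi (by fun_prop) measurable_const).ennreal_ofReal
  have hΦ : Measurable fun d => ENNReal.ofReal (Φ d - Φ t) :=
    ((continuous_binomTail.comp (by fun_prop)).sub continuous_const).measurable.ennreal_ofReal
  have hintegrand : ∀ d ∈ Ioi t, ((fun u : ℝ =>
      ENNReal.ofReal (if c < u then ld * exp (-ld * (u - c)) else 0))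
        * fun d => ENNReal.ofReal (Φ d - Φ t)) d
      = ENNReal.ofReal (ld * exp (-ld * (d - c)) * (Φ d - Φ t)) := fun d hd => by
    rw [Pi.mul_apply, if_pos (hct.trans_lt hd), ← ENNReal.ofReal_mul (by positivity)]
  rw [Measure.prod_apply (measurableSet_setOf_le_orderStat_le hK hKN t)]
  simp_rw [preimage_ofPred_eq, hslice]
  rw [lintegral_indicator measurableSet_Ici, shiftedExp,
    setLIntegral_withDensity_eq_setLIntegral_mul _ hdensity hΦ measurableSet_Ici,
    ← setLIntegral_congr Ioi_ae_eq_Ici, setLIntegral_congr_fun measurableSet_Ioi hintegrand]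
  exact toReal_lintegral_Ioi_deadline hK hKN hls hld hct

end Product

theorem prob_orderStat_tail_and_le_random_deadline_general
    {Ω : Type*} [MeasurableSpace Ω] (P : MeasureTheory.Measure Ω)
    (N K : ℕ) (hK : 1 ≤ K) (hKN : K ≤ N)
    (ls ld c t : ℝ) (hls : 0 < ls) (hld : 0 < ld) (ht : c < t)
    (T : Fin N → Ω → ℝ) (hT : ∀ i, Measurable (T i))
    (D : Ω → ℝ) (hD : Measurable D)
    (hlaw : MeasureTheory.Measure.map (fun ω => (D ω, fun i => T i ω)) P
      = (shiftedExp ld c).prod (MeasureTheory.Measure.pi (fun _ : Fin N => shiftedExp ls c))) :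
    (P {ω | t ≤ orderStat T K ω ∧ orderStat T K ω ≤ D ω}).toReal
      = ∑ j ∈ Finset.range K,
          ((K : ℝ) * (N.choose K : ℝ) * ((K - 1).choose j : ℝ) * (-1) ^ j)
            * ls * Real.exp (-(ls * ((N : ℝ) - K + 1 + j) + ld) * (t - c))
            / (ls * ((N : ℝ) - K + 1 + j) + ld) := by
  have hpair : Measurable fun ω => (D ω, fun i => T i ω) := hD.prodMk (measurable_pi_lambda _ hT)
  have h := toReal_prod_measure_orderStat_tail_le hK hKN hls hld ht.le
  rw [← hlaw, Measure.map_apply hpair (measurableSet_setOf_le_orderStat_le hK hKN t)] at h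
  exact h

theorem prob_orderStat_tail_and_le_random_deadline
    {Ω : Type*} [MeasurableSpace Ω] (P : MeasureTheory.Measure Ω) [IsProbabilityMeasure P]
    (N K : ℕ) (hK : 1 ≤ K) (hKN : K ≤ N)
    (ls ld c t : ℝ) (hls : 0 < ls) (hld : 0 < ld) (hc : 0 ≤ c) (ht : c < t)
    (T : Fin N → Ω → ℝ) (hT : ∀ i, Measurable (T i))
    (D : Ω → ℝ) (hD : Measurable D)
    (hlaw : MeasureTheory.Measure.map (fun ω => (D ω, fun i => T i ω)) P
      = (shiftedExp ld c).prod (MeasureTheory.Measure.pi (fun _ : Fin N => shiftedExp ls c))) :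
    (P {ω | t ≤ orderStat T K ω ∧ orderStat T K ω ≤ D ω}).toReal
      = ∑ j ∈ Finset.range K,
          ((K : ℝ) * (N.choose K : ℝ) * ((K - 1).choose j : ℝ) * (-1) ^ j)
            * ls * Real.exp (-(ls * ((N : ℝ) - K + 1 + j) + ld) * (t - c))
            / (ls * ((N : ℝ) - K + 1 + j) + ld) :=
  prob_orderStat_tail_and_le_random_deadline_general P N K hK hKN ls ld c t hls hld ht T hT D hD
    hlaw
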